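/- arXiv:1812.08457 — 4 statements merged into one kernel-verified Lean document; each statement's English description precedes it below -/
import Mathlib

section
/- Let α ≥ 1 and p : ℝ → ℝ be continuous and bounded. Then every solution x of the differential equation x'' + |x|^{α-1} x = p(t) exists globally on ℝ. More precisely, setting E(t) = (1/2) x'(t)² + (1/(α+1)) |x(t)|^{α+1}, one has √(E(t)) ≤ √(E(t₀)) + (1/√2) |∫_{t₀}^{t} |p(s)| ds| for all t, so E is bounded on finite intervals. -/
/-!
Along a solution the energy satisfies `E' = x' p`, and `|x'| ≤ √(2E)`, so `|E'| ≤ 2 √E · |p| / √2`: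
the square root of the energy grows at rate at most `|p| / √2`. Since `√E` need not be
differentiable where `E` vanishes, this is integrated for `√(E + ε)` and then `ε → 0`.
-/

open Set Filter Topology MeasureTheory

theorem hasDerivAt_energy {V f x v p : ℝ → ℝ} (hV : ∀ y, HasDerivAt V (f y) y) {t : ℝ}
    (hx : HasDerivAt x (v t) t) (hv : HasDerivAt v (p t - f (x t)) t) :
    HasDerivAt (fun s => 1 / 2 * v s ^ 2 + V (x s)) (v t * p t) t := by
  refine (((hv.pow 2).const_mul (1 / 2)).add ((hV (x t)).comp t hx)).congr_deriv ?_
  push_cast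
  ring

section SqrtEnergy

variable {E E' q : ℝ → ℝ}

theorem abs_sqrt_add_sub_sqrt_add_le_integral {a b ε : ℝ} (hab : a ≤ b)
    (hε : 0 < ε) (hE : ∀ s, HasDerivAt E (E' s) s) (hE0 : ∀ s, 0 ≤ E s)
    (hq : IntegrableOn q (Icc a b)) (hq0 : ∀ s, 0 ≤ q s)
    (hE' : ∀ s, |E' s| ≤ 2 * √(E s) * q s) :
    |√(E b + ε) - √(E a + ε)| ≤ ∫ s in a..b, q s := by
  have hpos : ∀ s, 0 < E s + ε := fun s => by linarith [hE0 s]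
  have hcont : ContinuousOn (fun s => √(E s + ε)) (Icc a b) :=
    ((continuous_iff_continuousAt.2 fun s => (hE s).continuousAt).add continuous_const).sqrt
      |>.continuousOn
  have hderiv : ∀ s, HasDerivAt (fun s => √(E s + ε)) (E' s / (2 * √(E s + ε))) s :=
    fun s => ((hE s).add_const ε).sqrt (hpos s).ne'
  have hbound : ∀ s, |E' s / (2 * √(E s + ε))| ≤ q s := fun s => by
    have h2S : 0 < 2 * √(E s + ε) := mul_pos two_pos (Real.sqrt_pos.2 (hpos s))
    rw [abs_div, abs_of_pos h2S, div_le_iff₀ h2S]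
    calc |E' s| ≤ 2 * √(E s) * q s := hE' s
      _ ≤ 2 * √(E s + ε) * q s := by gcongr; exacts [hq0 s, by linarith]
      _ = q s * (2 * √(E s + ε)) := by ring
  rw [abs_sub_le_iff]
  constructor
  · exact intervalIntegral.sub_le_integral_of_hasDeriv_right_of_le hab hcont
      (fun s _ => (hderiv s).hasDerivWithinAt) hq fun s _ => (le_abs_self _).trans (hbound s)
  · rw [← neg_sub_neg]
    exact intervalIntegral.sub_le_integral_of_hasDeriv_right_of_le hab hcont.neg
      (fun s _ => (hderiv s).neg.hasDerivWithinAt) hq fun s _ => (neg_le_abs _).trans (hbound s)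

theorem abs_sqrt_sub_sqrt_le_integral {a b : ℝ} (hab : a ≤ b)
    (hE : ∀ s, HasDerivAt E (E' s) s) (hE0 : ∀ s, 0 ≤ E s)
    (hq : IntegrableOn q (Icc a b)) (hq0 : ∀ s, 0 ≤ q s)
    (hE' : ∀ s, |E' s| ≤ 2 * √(E s) * q s) :
    |√(E b) - √(E a)| ≤ ∫ s in a..b, q s := by
  have hlim : Tendsto (fun ε => |√(E b + ε) - √(E a + ε)|) (𝓝[>] 0) (𝓝 |√(E b) - √(E a)|) := by
    have : Continuous fun ε => |√(E b + ε) - √(E a + ε)| := by fun_prop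
    simpa using (this.tendsto 0).mono_left nhdsWithin_le_nhds
  exact le_of_tendsto hlim <| eventually_nhdsWithin_of_forall fun ε hε =>
    abs_sqrt_add_sub_sqrt_add_le_integral hab hε hE hE0 hq hq0 hE'

theorem sqrt_le_sqrt_add_abs_integral (hE : ∀ s, HasDerivAt E (E' s) s) (hE0 : ∀ s, 0 ≤ E s)
    (hq : LocallyIntegrable q) (hq0 : ∀ s, 0 ≤ q s)
    (hE' : ∀ s, |E' s| ≤ 2 * √(E s) * q s) (t₀ t : ℝ) :
    √(E t) ≤ √(E t₀) + |∫ s in t₀..t, q s| := by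
  have hqI : ∀ a b, IntegrableOn q (Icc a b) := fun a b => hq.integrableOn_isCompact isCompact_Icc
  rcases le_total t₀ t with h | h
  · have := abs_sqrt_sub_sqrt_le_integral h hE hE0 (hqI _ _) hq0 hE'
    linarith [le_abs_self (√(E t) - √(E t₀)), le_abs_self (∫ s in t₀..t, q s)]
  · have := abs_sqrt_sub_sqrt_le_integral h hE hE0 (hqI _ _) hq0 hE'
    rw [intervalIntegral.integral_symm, abs_neg]
    linarith [neg_abs_le (√(E t₀) - √(E t)), le_abs_self (∫ s in t..t₀, q s)]

end SqrtEnergy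

theorem stmt0_general (α : ℝ) (hα : 1 ≤ α) (p x v : ℝ → ℝ)
    (hp_cont : Continuous p)
    (hx : ∀ t, HasDerivAt x (v t) t)
    (hv : ∀ t, HasDerivAt v (p t - |x t| ^ (α - 1) * x t) t)
    (E : ℝ → ℝ)
    (hE : ∀ t, E t = (1/2) * v t ^ 2 + (1/(α+1)) * |x t| ^ (α+1)) :
    ∀ t₀ t : ℝ, Real.sqrt (E t) ≤ Real.sqrt (E t₀) + (1 / Real.sqrt 2) * abs (∫ s in t₀..t, |p s|) := by
  have hα1 : 0 < α + 1 := by linarith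
  have hV : ∀ y, HasDerivAt (fun y => 1 / (α + 1) * |y| ^ (α + 1)) (|y| ^ (α - 1) * y) y := by
    intro y
    refine ((hasDerivAt_abs_rpow y (by linarith)).const_mul _).congr_deriv ?_
    rw [show α + 1 - 2 = α - 1 by ring]
    field_simp
  have hEd : ∀ t, HasDerivAt E (v t * p t) t := fun t => by
    rw [funext hE]; exact hasDerivAt_energy hV (hx t) (hv t)
  have hpot : ∀ t, 0 ≤ 1 / (α + 1) * |x t| ^ (α + 1) := fun t => by positivity
  have hE0 : ∀ t, 0 ≤ E t := fun t => by rw [hE]; positivity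
  have hEd_le : ∀ t, |v t * p t| ≤ 2 * √(E t) * (|p t| / √2) := fun t => by
    have hv_le : |v t| ≤ √2 * √(E t) := by
      rw [← Real.sqrt_mul zero_le_two, ← Real.sqrt_sq_eq_abs]
      exact Real.sqrt_le_sqrt (by rw [hE]; linarith [hpot t])
    calc |v t * p t| = |v t| * |p t| := abs_mul _ _
      _ ≤ √2 * √(E t) * |p t| := by gcongr
      _ = 2 * √(E t) * (|p t| / √2) := by field_simp; rw [Real.sq_sqrt zero_le_two]; ring
  intro t₀ t
  have := sqrt_le_sqrt_add_abs_integral hEd hE0 (hp_cont.abs.div_const _).locallyIntegrable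
    (fun t => by positivity) hEd_le t₀ t
  rwa [intervalIntegral.integral_div, abs_div, abs_of_pos (Real.sqrt_pos.2 two_pos),
    div_eq_inv_mul, ← one_div] at this

theorem stmt0 (α : ℝ) (hα : 1 ≤ α) (p x v : ℝ → ℝ)
    (hp_cont : Continuous p) (hp_bdd : ∃ M, ∀ t, |p t| ≤ M)
    (hx : ∀ t, HasDerivAt x (v t) t)
    (hv : ∀ t, HasDerivAt v (p t - |x t| ^ (α - 1) * x t) t)
    (E : ℝ → ℝ)
    (hE : ∀ t, E t = (1/2) * v t ^ 2 + (1/(α+1)) * |x t| ^ (α+1)) :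
    ∀ t₀ t : ℝ, Real.sqrt (E t) ≤ Real.sqrt (E t₀) + (1 / Real.sqrt 2) * abs (∫ s in t₀..t, |p s|) :=
  stmt0_general α hα p x v hp_cont hx hv E hE
end

section
/- Let α ≥ 1, Λ > 0, c, s as above, and let γ > 0 satisfy γ^{(α+3)/2} · (2/(α+3)) · Λ^{α+1} = 1. Then the map η : 𝕊¹ × (0,∞) → ℝ² \ {0}, η(θ, r) = (γ r^{2/(α+3)} c(θ), γ^{(α+1)/2} r^{(α+1)/(α+3)} s(θ)), is a symplectic diffeomorphism, i.e. it is bijective with smooth inverse and dx ∧ dv = dθ ∧ dr. -/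
/-!
Energy conservation keeps the orbit `t ↦ (c t, s t)` on the level curve
`v ^ 2 + 2 / (α + 1) * |x| ^ (α + 1) = 2 / (α + 1) * Λ ^ (α + 1)`. Uniqueness for this locally
Lipschitz ODE, combined with time reversal and with the reflection about the first zero of `c`,
shows that during one minimal period the orbit runs exactly once around the curve; as a continuous
injection of the compact circle it is then a homeomorphism onto the curve. The scaling
`(x, v) ↦ (a x, a ^ ((α + 1) / 2) v)` multiplies the energy by `a ^ (α + 1)`, so the punctured
plane is foliated by dilated copies of the curve and `η` is the resulting system of polar
coordinates, whose radius is read off the energy. The Jacobian identity is energy conservation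
once the powers of `r` cancel.
-/

open Set Filter Topology

theorem ODE_solution_unique_univ_of_locallyLipschitz {E : Type*} [NormedAddCommGroup E]
    [NormedSpace ℝ E] {v : E → E} (hv : LocallyLipschitz v) {f g : ℝ → E}
    (hf : ∀ t, HasDerivAt f (v (f t)) t) (hg : ∀ t, HasDerivAt g (v (g t)) t) {t₀ : ℝ}
    (heq : f t₀ = g t₀) : f = g := by
  have hopen : IsOpen {t | f t = g t} := isOpen_iff_mem_nhds.2 fun t (ht : f t = g t) => by
    obtain ⟨K, U, hU, hK⟩ := hv (f t)
    have hfU : ∀ᶠ u in 𝓝 t, f u ∈ U := (hf t).continuousAt hU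
    have hgU : ∀ᶠ u in 𝓝 t, g u ∈ U := (hg t).continuousAt (ht ▸ hU)
    exact ODE_solution_unique_of_eventually (v := fun _ => v) (s := fun _ => U)
      (.of_forall fun _ => hK) (hfU.mono fun u hu => ⟨hf u, hu⟩)
      (hgU.mono fun u hu => ⟨hg u, hu⟩) ht
  have hclosed : IsClosed {t | f t = g t} :=
    isClosed_eq (continuous_iff_continuousAt.2 fun t => (hf t).continuousAt)
      (continuous_iff_continuousAt.2 fun t => (hg t).continuousAt)
  have huniv := IsClopen.eq_univ ⟨hclosed, hopen⟩ ⟨t₀, heq⟩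
  exact funext fun t => (huniv ▸ mem_univ t : t ∈ {t | f t = g t})

lemma exists_first_zero {f : ℝ → ℝ} {a b : ℝ} (hf : ContinuousOn f (Icc a b)) (ha : 0 < f a)
    (hb : ∃ t ∈ Icc a b, f t ≤ 0) : ∃ t₁ ∈ Ioc a b, f t₁ = 0 ∧ ∀ t ∈ Ico a t₁, 0 < f t := by
  have hzero : ∀ t ∈ Icc a b, f t ≤ 0 → ∃ u ∈ Icc a t, f u = 0 := fun t ht hft =>
    intermediate_value_Icc' ht.1 (hf.mono (Icc_subset_Icc_right ht.2)) ⟨hft, ha.le⟩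
  set S := Icc a b ∩ f ⁻¹' {0}
  have hS : IsCompact S :=
    isCompact_Icc.of_isClosed_subset (hf.preimage_isClosed_of_isClosed isClosed_Icc
      isClosed_singleton) inter_subset_left
  obtain ⟨t, ht, hft⟩ := hb
  obtain ⟨u, hu, hfu⟩ := hzero t ht hft
  have hmem : sInf S ∈ S := hS.sInf_mem ⟨u, ⟨hu.1, hu.2.trans ht.2⟩, hfu⟩
  have hfirst : ∀ t ∈ Ico a (sInf S), 0 < f t := fun t ht => by
    by_contra! hft
    obtain ⟨u, hu, hfu⟩ := hzero t ⟨ht.1, ht.2.le.trans hmem.1.2⟩ hft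
    have := csInf_le hS.bddBelow ⟨⟨hu.1, hu.2.trans (ht.2.le.trans hmem.1.2)⟩, hfu⟩
    linarith [hu.2, ht.2]
  refine ⟨sInf S, ⟨hmem.1.1.lt_of_ne fun h => ?_, hmem.1.2⟩, hmem.2, hfirst⟩
  have : f a = 0 := h ▸ hmem.2
  linarith

lemma Function.Periodic.mem_zmultiples_of_minimal {β : Type*} {f : ℝ → β} {p T : ℝ}
    (hp : 0 < p) (hf : Function.Periodic f p)
    (hmin : ∀ T, 0 < T → Function.Periodic f T → p ≤ T) (hT : Function.Periodic f T) :
    T ∈ AddSubgroup.zmultiples p := by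
  have hfract : Function.Periodic f (p * Int.fract (T / p)) := by
    have h : p * Int.fract (T / p) = T - ⌊T / p⌋ * p := by
      rw [← Int.self_sub_floor]; field_simp
    rw [h]
    exact hT.sub_period (hf.int_mul _)
  have hzero : Int.fract (T / p) = 0 := by
    by_contra hne
    have := hmin _ (mul_pos hp ((Int.fract_nonneg _).lt_of_ne' hne)) hfract
    nlinarith [Int.fract_lt_one (T / p)]
  refine ⟨⌊T / p⌋, ?_⟩
  rw [← Int.self_sub_floor, sub_eq_zero] at hzero
  change ⌊T / p⌋ • p = T
  rw [zsmul_eq_mul, ← hzero]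
  field_simp

noncomputable section

namespace PowerOscillator

lemma hasDerivAt_abs_rpow_mul_self_of_pos (α : ℝ) {x : ℝ} (hx : 0 < x) :
    HasDerivAt (fun y => |y| ^ (α - 1) * y) (α * |x| ^ (α - 1)) x := by
  have hEq : (fun y => y ^ α) =ᶠ[𝓝 x] fun y => |y| ^ (α - 1) * y := by
    filter_upwards [Ioi_mem_nhds hx] with y (hy : 0 < y)
    rw [abs_of_pos hy, Real.rpow_sub_one hy.ne', div_mul_cancel₀ _ hy.ne']
  rw [abs_of_pos hx]
  exact (Real.hasDerivAt_rpow_const (Or.inl hx.ne')).congr_of_eventuallyEq hEq.symm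

lemma hasDerivAt_abs_rpow_mul_self_zero {α : ℝ} (hα : 1 < α) :
    HasDerivAt (fun y => |y| ^ (α - 1) * y) (α * |0| ^ (α - 1)) 0 := by
  have h0 : (0 : ℝ) ^ (α - 1) = 0 := Real.zero_rpow (by linarith)
  rw [abs_zero, h0, mul_zero, hasDerivAt_iff_tendsto_slope_zero]
  have hcont : Tendsto (fun t : ℝ => |t| ^ (α - 1)) (𝓝 0) (𝓝 0) := by
    have h := ((Real.continuous_rpow_const (q := α - 1) (by linarith)).comp
      continuous_abs).tendsto 0
    rwa [Function.comp_apply, abs_zero, h0] at h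
  refine (hcont.mono_left nhdsWithin_le_nhds).congr'
    (eventually_nhdsWithin_of_forall fun t (ht : t ≠ 0) => ?_)
  simp only [zero_add, smul_eq_mul, mul_zero, sub_zero]
  field_simp

lemma hasDerivAt_abs_rpow_mul_self {α : ℝ} (hα : 1 ≤ α) (x : ℝ) :
    HasDerivAt (fun y => |y| ^ (α - 1) * y) (α * |x| ^ (α - 1)) x := by
  rcases lt_trichotomy x 0 with hx | rfl | hx
  · have h := ((hasDerivAt_abs_rpow_mul_self_of_pos α (neg_pos.2 hx)).comp x
      (hasDerivAt_neg x)).neg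
    rw [abs_neg] at h
    refine (h.congr_deriv (by ring)).congr_of_eventuallyEq (Eventually.of_forall fun y => ?_)
    simp [abs_neg]
  · rcases hα.eq_or_lt with rfl | hα
    · simpa using hasDerivAt_id' (0 : ℝ)
    · exact hasDerivAt_abs_rpow_mul_self_zero hα
  · exact hasDerivAt_abs_rpow_mul_self_of_pos α hx

lemma contDiff_abs_rpow_mul_self {α : ℝ} (hα : 1 ≤ α) :
    ContDiff ℝ 1 fun y : ℝ => |y| ^ (α - 1) * y := by
  rw [contDiff_one_iff_deriv]
  refine ⟨fun x => (hasDerivAt_abs_rpow_mul_self hα x).differentiableAt, ?_⟩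
  rw [funext fun x => (hasDerivAt_abs_rpow_mul_self hα x).deriv]
  exact continuous_const.mul ((Real.continuous_rpow_const (by linarith)).comp continuous_abs)

lemma mul_abs_rpow_mul_self {α : ℝ} (hα : α + 1 ≠ 0) (x : ℝ) :
    x * (|x| ^ (α - 1) * x) = |x| ^ (α + 1) := by
  rcases eq_or_ne x 0 with rfl | hx
  · simp [Real.zero_rpow hα]
  · have hx' : 0 < |x| := abs_pos.2 hx
    rw [show α + 1 = (α - 1) + 2 by ring, Real.rpow_add hx', Real.rpow_two, sq_abs]
    ring

def energy (α : ℝ) (p : ℝ × ℝ) : ℝ := p.2 ^ 2 + 2 / (α + 1) * |p.1| ^ (α + 1)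

def dilate (α a : ℝ) (p : ℝ × ℝ) : ℝ × ℝ := (a * p.1, a ^ ((α + 1) / 2) * p.2)

section Energy

variable {α a b : ℝ} {p : ℝ × ℝ}

lemma energy_zero : energy α 0 = 0 := by
  rcases eq_or_ne (α + 1) 0 with h | h <;> simp [energy, h, Real.zero_rpow]

lemma energy_pos (hα : 0 < α + 1) (hp : p ≠ 0) : 0 < energy α p := by
  rcases eq_or_ne p.1 0 with h1 | h1
  · have h2 : p.2 ≠ 0 := fun h2 => hp (Prod.ext h1 h2)
    have : 0 ≤ |p.1| ^ (α + 1) := by positivity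
    unfold energy; positivity
  · have : 0 < |p.1| ^ (α + 1) := Real.rpow_pos_of_pos (abs_pos.2 h1) _
    unfold energy; positivity

lemma continuous_energy (hα : 0 ≤ α + 1) : Continuous (energy α) := by
  unfold energy
  have := Real.continuous_rpow_const hα
  fun_prop

lemma energy_dilate (ha : 0 ≤ a) (p : ℝ × ℝ) :
    energy α (dilate α a p) = a ^ (α + 1) * energy α p := by
  have hsq : (a ^ ((α + 1) / 2)) ^ 2 = a ^ (α + 1) := by
    rw [← Real.rpow_natCast, ← Real.rpow_mul ha]; norm_num
  simp only [energy, dilate, mul_pow, hsq, abs_mul, abs_of_nonneg ha,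
    Real.mul_rpow ha (abs_nonneg _)]
  ring

lemma dilate_dilate (ha : 0 ≤ a) (hb : 0 ≤ b) (p : ℝ × ℝ) :
    dilate α a (dilate α b p) = dilate α (a * b) p := by
  simp only [dilate, Real.mul_rpow ha hb, mul_assoc]

lemma dilate_one (p : ℝ × ℝ) : dilate α 1 p = p := by
  simp [dilate]

lemma dilate_inv_dilate (ha : 0 < a) (p : ℝ × ℝ) : dilate α a⁻¹ (dilate α a p) = p := by
  rw [dilate_dilate (inv_nonneg.2 ha.le) ha.le, inv_mul_cancel₀ ha.ne', dilate_one]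

lemma dilate_dilate_inv (ha : 0 < a) (p : ℝ × ℝ) : dilate α a (dilate α a⁻¹ p) = p := by
  rw [dilate_dilate ha.le (inv_nonneg.2 ha.le), mul_inv_cancel₀ ha.ne', dilate_one]

lemma abs_fst_le_of_energy_eq {Λ : ℝ} (hα : 0 < α + 1) (hΛ : 0 ≤ Λ)
    (h : energy α p = energy α (Λ, 0)) : |p.1| ≤ Λ := by
  have hle : |p.1| ^ (α + 1) ≤ Λ ^ (α + 1) := by
    have hcoef : 0 < 2 / (α + 1) := by positivity
    simp only [energy, abs_of_nonneg hΛ] at h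
    nlinarith [sq_nonneg p.2]
  exact (Real.rpow_le_rpow_iff (abs_nonneg _) hΛ hα).1 hle

end Energy

structure IsSolution (α : ℝ) (c s : ℝ → ℝ) : Prop where
  hasDerivAt_c : ∀ t, HasDerivAt c (s t) t
  hasDerivAt_s : ∀ t, HasDerivAt s (-(|c t| ^ (α - 1) * c t)) t

namespace IsSolution

variable {α : ℝ} {c s : ℝ → ℝ}

lemma continuous_c (h : IsSolution α c s) : Continuous c :=
  continuous_iff_continuousAt.2 fun t => (h.hasDerivAt_c t).continuousAt

lemma continuous_s (h : IsSolution α c s) : Continuous s :=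
  continuous_iff_continuousAt.2 fun t => (h.hasDerivAt_s t).continuousAt

lemma comp_add_const (h : IsSolution α c s) (T : ℝ) :
    IsSolution α (fun t => c (t + T)) (fun t => s (t + T)) :=
  ⟨fun t => (h.hasDerivAt_c (t + T)).comp_add_const t T,
    fun t => (h.hasDerivAt_s (t + T)).comp_add_const t T⟩

lemma comp_const_sub (h : IsSolution α c s) (a : ℝ) :
    IsSolution α (fun t => c (a - t)) (fun t => -s (a - t)) :=
  ⟨fun t => (h.hasDerivAt_c (a - t)).comp_const_sub a t,
    fun t => ((h.hasDerivAt_s (a - t)).comp_const_sub a t).neg.congr_deriv (neg_neg _)⟩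

lemma neg (h : IsSolution α c s) : IsSolution α (fun t => -c t) (fun t => -s t) :=
  ⟨fun t => (h.hasDerivAt_c t).neg,
    fun t => (h.hasDerivAt_s t).neg.congr_deriv (by rw [abs_neg]; ring)⟩

lemma energy_eq (h : IsSolution α c s) (hα : 0 < α) (t : ℝ) :
    energy α (c t, s t) = energy α (c 0, s 0) := by
  have hderiv : ∀ t, HasDerivAt (fun t => energy α (c t, s t)) 0 t := fun t => by
    have habs := (hasDerivAt_abs_rpow (c t) (p := α + 1) (by linarith)).comp t (h.hasDerivAt_c t)
    rw [show α + 1 - 2 = α - 1 by ring] at habs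
    refine (((h.hasDerivAt_s t).pow 2).add (habs.const_mul (2 / (α + 1)))).congr_deriv ?_
    field_simp
    ring
  exact is_const_of_deriv_eq_zero (fun t => (hderiv t).differentiableAt)
    (fun t => (hderiv t).deriv) t 0

lemma eq_of_eq (hα : 1 ≤ α) {c' s' : ℝ → ℝ} (h : IsSolution α c s) (h' : IsSolution α c' s')
    {t₀ : ℝ} (hc : c t₀ = c' t₀) (hs : s t₀ = s' t₀) : c = c' ∧ s = s' := by
  have hv : ContDiff ℝ 1 fun p : ℝ × ℝ => (p.2, -(|p.1| ^ (α - 1) * p.1)) :=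
    contDiff_snd.prodMk ((contDiff_abs_rpow_mul_self hα).comp contDiff_fst).neg
  have hcs := ODE_solution_unique_univ_of_locallyLipschitz hv.locallyLipschitz
    (fun t => (h.hasDerivAt_c t).prodMk (h.hasDerivAt_s t))
    (fun t => (h'.hasDerivAt_c t).prodMk (h'.hasDerivAt_s t)) (Prod.ext hc hs)
  exact ⟨funext fun t => congrArg Prod.fst (congrFun hcs t),
    funext fun t => congrArg Prod.snd (congrFun hcs t)⟩

lemma periodic_s (h : IsSolution α c s) {p : ℝ} (hper : Function.Periodic c p) :
    Function.Periodic s p := fun t => by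
  have hshift := (h.hasDerivAt_c (t + p)).comp_add_const t p
  rw [show (fun u => c (u + p)) = c from funext hper] at hshift
  exact hshift.unique (h.hasDerivAt_c t)

lemma strictAntiOn_s (h : IsSolution α c s) {a b : ℝ} (hpos : ∀ t ∈ Ioo a b, 0 < c t) :
    StrictAntiOn s (Icc a b) :=
  strictAntiOn_of_deriv_neg (convex_Icc a b) h.continuous_s.continuousOn fun t ht => by
    rw [interior_Icc] at ht
    have hct := hpos t ht
    rw [(h.hasDerivAt_s t).deriv, abs_of_pos hct, neg_lt_zero]
    positivity

lemma strictAntiOn_c (h : IsSolution α c s) {a b : ℝ} (hneg : ∀ t ∈ Ioo a b, s t < 0) :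
    StrictAntiOn c (Icc a b) :=
  strictAntiOn_of_deriv_neg (convex_Icc a b) h.continuous_c.continuousOn fun t ht => by
    rw [interior_Icc] at ht
    rw [(h.hasDerivAt_c t).deriv]
    exact hneg t ht

lemma exists_nonpos_c (h : IsSolution α c s) (hs0 : s 0 = 0) {p : ℝ}
    (hp : 0 < p) (hper : Function.Periodic c p) : ∃ t ∈ Icc 0 p, c t ≤ 0 := by
  by_contra! hpos
  have hs := h.strictAntiOn_s fun t ht => hpos t (Ioo_subset_Icc_self ht)
  have hc := h.strictAntiOn_c fun t ht =>
    hs0 ▸ hs (left_mem_Icc.2 hp.le) (Ioo_subset_Icc_self ht) ht.1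
  exact (hc (left_mem_Icc.2 hp.le) (right_mem_Icc.2 hp.le) hp).ne (by simpa using hper 0)

lemma reflect_of_c_eq_zero (hα : 1 ≤ α) (h : IsSolution α c s) {t₁ : ℝ} (ht₁ : c t₁ = 0)
    (t : ℝ) : c (2 * t₁ - t) = -c t ∧ s (2 * t₁ - t) = s t := by
  obtain ⟨hc, hs⟩ := h.eq_of_eq hα (h.comp_const_sub (2 * t₁)).neg (t₀ := t₁)
    (by simp [two_mul, ht₁]) (by simp [two_mul])
  have hct := congrFun hc t
  have hst := congrFun hs t
  simp only [neg_neg] at hct hst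
  exact ⟨by linarith, hst.symm⟩

lemma even_of_s_eq_zero (hα : 1 ≤ α) (h : IsSolution α c s) (hs0 : s 0 = 0) (t : ℝ) :
    c (-t) = c t ∧ s (-t) = -s t := by
  obtain ⟨hc, hs⟩ := h.eq_of_eq hα (h.comp_const_sub 0) (t₀ := 0) (by simp) (by simp [hs0])
  have hct := congrFun hc t
  have hst := congrFun hs t
  simp only [zero_sub] at hct hst
  exact ⟨hct.symm, by linarith⟩

lemma exists_eq_of_energy_eq (hα : 1 ≤ α) (h : IsSolution α c s) (hc0 : 0 < c 0)
    (hs0 : s 0 = 0) {p : ℝ} (hp : 0 < p) (hper : Function.Periodic c p) {q : ℝ × ℝ}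
    (hq : energy α q = energy α (c 0, 0)) : ∃ t, (c t, s t) = q := by
  obtain ⟨t₁, ht₁, hct₁, hpos⟩ := exists_first_zero h.continuous_c.continuousOn hc0
    (h.exists_nonpos_c hs0 hp hper)
  have hrefl := h.reflect_of_c_eq_zero hα hct₁
  have hs_nonpos₁ : ∀ t ∈ Icc 0 t₁, s t ≤ 0 := fun t ht =>
    hs0 ▸ (h.strictAntiOn_s fun u hu => hpos u (Ioo_subset_Ico_self hu)).antitoneOn
      (left_mem_Icc.2 ht₁.1.le) ht ht.1
  have hs_nonpos : ∀ t ∈ Icc 0 (2 * t₁), s t ≤ 0 := fun t ht => by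
    rcases le_total t t₁ with htt | htt
    · exact hs_nonpos₁ t ⟨ht.1, htt⟩
    · rw [← (hrefl t).2]
      exact hs_nonpos₁ _ ⟨by linarith [ht.2], by linarith⟩
  -- On `[0, 2 t₁]` the solution runs from `(c 0, 0)` to `(-c 0, 0)` along the half `s ≤ 0` of
  -- the level curve; evenness supplies the other half.
  have hc2t₁ : c (2 * t₁) = -c 0 := by simpa using (hrefl 0).1
  obtain ⟨t, ht, hct⟩ : ∃ t ∈ Icc 0 (2 * t₁), c t = q.1 :=
    intermediate_value_Icc' (by linarith [ht₁.1]) h.continuous_c.continuousOn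
      (by rw [hc2t₁]; exact abs_le.1 (abs_fst_le_of_energy_eq (by linarith) hc0.le hq))
  have hsq : |s t| = |q.2| := by
    have henergy := h.energy_eq (by linarith) t
    rw [hs0, ← hq, hct] at henergy
    simp only [energy] at henergy
    exact sq_eq_sq_iff_abs_eq_abs _ _ |>.1 (by linarith)
  rw [abs_of_nonpos (hs_nonpos t ht)] at hsq
  rcases le_or_gt q.2 0 with hq2 | hq2
  · rw [abs_of_nonpos hq2] at hsq
    exact ⟨t, Prod.ext hct (by linarith)⟩
  · rw [abs_of_pos hq2] at hsq
    obtain ⟨hc_even, hs_odd⟩ := h.even_of_s_eq_zero hα hs0 t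
    exact ⟨-t, Prod.ext (hc_even.trans hct) (by rw [hs_odd]; linarith)⟩

lemma periodic_orbit (h : IsSolution α c s) {p : ℝ} (hper : Function.Periodic c p) :
    Function.Periodic (fun t => (c t, s t)) p :=
  fun t => Prod.ext (hper t) (h.periodic_s hper t)

lemma continuous_lift_orbit (h : IsSolution α c s) {p : ℝ} (hper : Function.Periodic c p) :
    Continuous (h.periodic_orbit hper).lift :=
  (QuotientAddGroup.isQuotientMap_mk _).continuous_iff.2 (h.continuous_c.prodMk h.continuous_s)

lemma energy_lift_orbit (hα : 0 < α) (h : IsSolution α c s) (hs0 : s 0 = 0) {p : ℝ}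
    (hper : Function.Periodic c p) (x : AddCircle p) :
    energy α ((h.periodic_orbit hper).lift x) = energy α (c 0, 0) :=
  QuotientAddGroup.induction_on x fun t => by
    rw [Function.Periodic.lift_coe, h.energy_eq hα, hs0]

lemma injective_lift_orbit (hα : 1 ≤ α) (h : IsSolution α c s) {p : ℝ} (hp : 0 < p)
    (hper : Function.Periodic c p) (hmin : ∀ T, 0 < T → Function.Periodic c T → p ≤ T) :
    (h.periodic_orbit hper).lift.Injective := fun x y =>
  QuotientAddGroup.induction_on x fun θ₁ => QuotientAddGroup.induction_on y fun θ₂ hθ => by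
    obtain ⟨hc₁₂, hs₁₂⟩ := Prod.ext_iff.1 hθ
    obtain ⟨hc, -⟩ := h.eq_of_eq hα (h.comp_add_const (θ₂ - θ₁)) (t₀ := θ₁)
      (by simpa using hc₁₂) (by simpa using hs₁₂)
    rw [QuotientAddGroup.eq, neg_add_eq_sub]
    exact hper.mem_zmultiples_of_minimal hp hmin fun t => (congrFun hc t).symm

end IsSolution

def polarScale (α E : ℝ) (p : ℝ × ℝ) : ℝ := (energy α p / E) ^ (α + 1)⁻¹

/-- The inverse of `polarMap`, with the circle coordinate replaced by the point of the level curve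
`energy α = E` it parametrizes. -/
def polarCoord (α γ κ E : ℝ) (p : ℝ × ℝ) : (ℝ × ℝ) × ℝ :=
  (dilate α (polarScale α E p)⁻¹ p, (polarScale α E p / γ) ^ κ⁻¹)

def polarMap {X : Type*} (α γ κ : ℝ) (orbit : X → ℝ × ℝ) (q : X × ℝ) : ℝ × ℝ :=
  dilate α (γ * q.2 ^ κ) (orbit q.1)

lemma polarMap_apply {X : Type*} {α γ r : ℝ} (hγ : 0 ≤ γ) (hr : 0 < r) (orbit : X → ℝ × ℝ)
    (x : X) : polarMap α γ (2 / (α + 3)) orbit (x, r) =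
      (γ * r ^ (2 / (α + 3)) * (orbit x).1,
        γ ^ ((α + 1) / 2) * r ^ ((α + 1) / (α + 3)) * (orbit x).2) := by
  rw [polarMap, dilate, Real.mul_rpow hγ (by positivity), ← Real.rpow_mul hr.le]
  ring_nf

section Polar

variable {α γ κ E : ℝ} {p : ℝ × ℝ}

lemma polarScale_pos (hα : 0 < α + 1) (hE : 0 < E) (hp : p ≠ 0) : 0 < polarScale α E p :=
  Real.rpow_pos_of_pos (div_pos (energy_pos hα hp) hE) _

lemma polarScale_dilate (hα : α + 1 ≠ 0) (hE : 0 < E) {a : ℝ} (ha : 0 < a) {q : ℝ × ℝ}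
    (hq : energy α q = E) : polarScale α E (dilate α a q) = a := by
  rw [polarScale, energy_dilate ha.le, hq, mul_div_cancel_right₀ _ hE.ne',
    Real.rpow_rpow_inv ha.le hα]

lemma energy_dilate_polarScale_inv (hα : 0 < α + 1) (hE : 0 < E) (hp : p ≠ 0) :
    energy α (dilate α (polarScale α E p)⁻¹ p) = E := by
  have he : 0 < energy α p / E := div_pos (energy_pos hα hp) hE
  rw [energy_dilate (inv_nonneg.2 (polarScale_pos hα hE hp).le), polarScale,
    Real.inv_rpow (Real.rpow_nonneg he.le _), Real.rpow_inv_rpow he.le hα.ne', inv_div,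
    div_mul_cancel₀ _ (energy_pos hα hp).ne']

lemma continuousOn_polarCoord (hα : 0 < α + 1) (hγ : 0 < γ) (hE : 0 < E) :
    ContinuousOn (polarCoord α γ κ E) {p | p ≠ 0} := by
  intro p hp
  have hS : 0 < polarScale α E p := polarScale_pos hα hE hp
  have hScont : ContinuousAt (polarScale α E) p :=
    ((continuous_energy hα.le).continuousAt.div_const E).rpow_const
      (Or.inl (div_pos (energy_pos hα hp) hE).ne')
  apply ContinuousAt.continuousWithinAt
  unfold polarCoord dilate
  fun_prop (disch := first | positivity | exact Or.inl (by positivity))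

variable {X : Type*} {orbit : X → ℝ × ℝ}

lemma polarCoord_polarMap (hα : α + 1 ≠ 0) (hγ : 0 < γ) (hκ : κ ≠ 0) (hE : 0 < E)
    (horbit : ∀ x, energy α (orbit x) = E) {q : X × ℝ} (hq : 0 < q.2) :
    polarCoord α γ κ E (polarMap α γ κ orbit q) = (orbit q.1, q.2) := by
  have ha : 0 < γ * q.2 ^ κ := mul_pos hγ (Real.rpow_pos_of_pos hq κ)
  rw [polarCoord, polarMap, polarScale_dilate hα hE ha (horbit q.1), dilate_inv_dilate ha,
    mul_div_cancel_left₀ _ hγ.ne', Real.rpow_rpow_inv hq.le hκ]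

lemma polarMap_of_polarCoord_eq (hα : 0 < α + 1) (hγ : 0 < γ) (hκ : κ ≠ 0) (hE : 0 < E)
    (hp : p ≠ 0) {q : X × ℝ} (hq : polarCoord α γ κ E p = (orbit q.1, q.2)) :
    polarMap α γ κ orbit q = p := by
  have hS := polarScale_pos hα hE hp
  simp only [polarCoord, Prod.mk.injEq] at hq
  obtain ⟨h1, h2⟩ := hq
  rw [polarMap, ← h1, ← h2, Real.rpow_inv_rpow (div_pos hS hγ).le hκ,
    mul_div_cancel₀ _ hγ.ne', dilate_dilate_inv hS]

lemma bijOn_polarMap (hα : 0 < α + 1) (hγ : 0 < γ) (hκ : κ ≠ 0) (hE : 0 < E)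
    (horbit : ∀ x, energy α (orbit x) = E) (hinj : orbit.Injective)
    (hsurj : ∀ y, energy α y = E → ∃ x, orbit x = y) :
    BijOn (polarMap α γ κ orbit) (univ ×ˢ Ioi 0) {p | p ≠ 0} := by
  refine ⟨fun q hq hzero => ?_, fun q₁ hq₁ q₂ hq₂ heq => ?_, fun p hp => ?_⟩
  · have ha : 0 < γ * q.2 ^ κ := mul_pos hγ (Real.rpow_pos_of_pos hq.2 κ)
    have h := energy_dilate (α := α) ha.le (orbit q.1)
    rw [← polarMap, hzero, energy_zero, horbit] at h
    exact (mul_pos (Real.rpow_pos_of_pos ha _) hE).ne' h.symm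
  · have h := congrArg (polarCoord α γ κ E) heq
    rw [polarCoord_polarMap hα.ne' hγ hκ hE horbit hq₁.2,
      polarCoord_polarMap hα.ne' hγ hκ hE horbit hq₂.2, Prod.mk.injEq] at h
    exact Prod.ext (hinj h.1) h.2
  · obtain ⟨x, hx⟩ := hsurj _ (energy_dilate_polarScale_inv hα hE hp)
    have hr : 0 < (polarScale α E p / γ) ^ κ⁻¹ :=
      Real.rpow_pos_of_pos (div_pos (polarScale_pos hα hE hp) hγ) _
    exact ⟨(x, _), ⟨mem_univ x, hr⟩,
      polarMap_of_polarCoord_eq hα hγ hκ hE hp (by rw [polarCoord, hx])⟩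

lemma continuousOn_polarMap [TopologicalSpace X] (hγ : 0 < γ) (hcont : Continuous orbit) :
    ContinuousOn (polarMap α γ κ orbit) (univ ×ˢ Ioi 0) := by
  rintro q ⟨-, hq : 0 < q.2⟩
  apply ContinuousAt.continuousWithinAt
  unfold polarMap dilate
  fun_prop (disch := exact Or.inl (by positivity))

lemma continuousOn_of_rightInvOn_polarMap [TopologicalSpace X] [CompactSpace X]
    (hα : 0 < α + 1) (hγ : 0 < γ) (hκ : κ ≠ 0) (hE : 0 < E)
    (horbit : ∀ x, energy α (orbit x) = E) (hcont : Continuous orbit) (hinj : orbit.Injective)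
    {ψ : ℝ × ℝ → X × ℝ} (hψ : MapsTo ψ {p | p ≠ 0} (univ ×ˢ Ioi 0))
    (hψ' : RightInvOn ψ (polarMap α γ κ orbit) {p | p ≠ 0}) :
    ContinuousOn ψ {p | p ≠ 0} := by
  have hind : Topology.IsInducing (Prod.map orbit id) :=
    (hcont.isClosedEmbedding hinj).isInducing.prodMap (Topology.IsInducing.id (X := ℝ))
  refine hind.continuousOn_iff.2 <|
    (continuousOn_polarCoord (κ := κ) hα hγ hE).congr fun p hp => ?_
  conv_rhs => rw [← hψ' hp]
  exact (polarCoord_polarMap hα.ne' hγ hκ hE horbit (hψ hp).2).symm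

end Polar

lemma jacobian_eq {α γ r : ℝ} (hα : 0 < α + 1) (hγ : 0 < γ) (hr : 0 < r) (x v : ℝ) :
    (γ * r ^ (2 / (α + 3)) * v) *
        (γ ^ ((α + 1) / 2) * ((α + 1) / (α + 3)) * r ^ ((α + 1) / (α + 3) - 1) * v) -
      (γ * (2 / (α + 3)) * r ^ (2 / (α + 3) - 1) * x) *
        (γ ^ ((α + 1) / 2) * r ^ ((α + 1) / (α + 3)) * (-(|x| ^ (α - 1) * x))) =
      γ ^ ((α + 3) / 2) * ((α + 1) / (α + 3)) * energy α (x, v) := by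
  have hα3 : α + 3 ≠ 0 := by linarith
  have hr₁ : r ^ (2 / (α + 3)) * r ^ ((α + 1) / (α + 3) - 1) = 1 := by
    rw [← Real.rpow_add hr, show 2 / (α + 3) + ((α + 1) / (α + 3) - 1) = 0 by field_simp; ring,
      Real.rpow_zero]
  have hr₂ : r ^ (2 / (α + 3) - 1) * r ^ ((α + 1) / (α + 3)) = 1 := by
    rw [← Real.rpow_add hr, show 2 / (α + 3) - 1 + (α + 1) / (α + 3) = 0 by field_simp; ring,
      Real.rpow_zero]
  have hγ' : γ * γ ^ ((α + 1) / 2) = γ ^ ((α + 3) / 2) := by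
    rw [← Real.rpow_one_add' hγ.le (by positivity)]
    ring_nf
  have hE : (α + 1) / (α + 3) * energy α (x, v) =
      (α + 1) / (α + 3) * v ^ 2 + 2 / (α + 3) * |x| ^ (α + 1) := by
    simp only [energy]
    field_simp
  linear_combination (-γ ^ ((α + 3) / 2)) * hE +
    (γ ^ ((α + 1) / 2) * γ * ((α + 1) / (α + 3)) * v ^ 2) * hr₁ +
    (γ ^ ((α + 1) / 2) * γ * (2 / (α + 3)) * (x * (|x| ^ (α - 1) * x))) * hr₂ +
    ((α + 1) / (α + 3) * v ^ 2 + 2 / (α + 3) * (x * (|x| ^ (α - 1) * x))) * hγ' +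
    (γ ^ ((α + 3) / 2) * (2 / (α + 3))) * mul_abs_rpow_mul_self hα.ne' x

end PowerOscillator

end

open PowerOscillator

theorem stmt5 (α Λ γ : ℝ) (hα : 1 ≤ α) (hΛ : 0 < Λ) (hγ : 0 < γ)
    (hγdef : γ ^ ((α + 3)/2) * (2/(α + 3)) * Λ ^ (α + 1) = 1)
    (c s : ℝ → ℝ)
    (hc : ∀ t, HasDerivAt c (s t) t)
    (hs : ∀ t, HasDerivAt s (-(|c t| ^ (α - 1) * c t)) t)
    (hc0 : c 0 = Λ) (hs0 : s 0 = 0)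
    (hper : Function.Periodic c (2 * Real.pi))
    (hmin : ∀ T, 0 < T → Function.Periodic c T → 2 * Real.pi ≤ T)
    (η : AddCircle (2 * Real.pi) × ℝ → ℝ × ℝ)
    (hη : ∀ (θ r : ℝ), η ((θ : AddCircle (2 * Real.pi)), r) =
      (γ * r ^ (2/(α + 3)) * c θ, γ ^ ((α + 1)/2) * r ^ ((α + 1)/(α + 3)) * s θ)) :
    Set.BijOn η (Set.univ ×ˢ Set.Ioi 0) {p : ℝ × ℝ | p ≠ 0} ∧
    ContinuousOn η (Set.univ ×ˢ Set.Ioi 0) ∧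
    (∃ ηinv : ℝ × ℝ → AddCircle (2 * Real.pi) × ℝ,
      ContinuousOn ηinv {p : ℝ × ℝ | p ≠ 0} ∧
      Set.InvOn ηinv η (Set.univ ×ˢ Set.Ioi 0) {p : ℝ × ℝ | p ≠ 0}) ∧
    (∀ (θ r : ℝ), 0 < r →
      (γ * r ^ (2/(α + 3)) * s θ) *
        (γ ^ ((α + 1)/2) * ((α + 1)/(α + 3)) * r ^ ((α + 1)/(α + 3) - 1) * s θ) -
      (γ * (2/(α + 3)) * r ^ (2/(α + 3) - 1) * c θ) *
        (γ ^ ((α + 1)/2) * r ^ ((α + 1)/(α + 3)) * (-(|c θ| ^ (α - 1) * c θ))) = 1) := by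
  have hsol : IsSolution α c s := ⟨hc, hs⟩
  have hα₁ : 0 < α + 1 := by linarith
  have hp : 0 < 2 * Real.pi := by positivity
  have : Fact (0 < 2 * Real.pi) := ⟨hp⟩
  have hE : 0 < energy α (c 0, 0) := energy_pos hα₁ (by simp [hc0, hΛ.ne'])
  set orbit := (hsol.periodic_orbit hper).lift
  have horbit := hsol.energy_lift_orbit (by linarith) hs0 hper
  have hinj := hsol.injective_lift_orbit hα hp hper hmin
  have hsurj (q : ℝ × ℝ) (hq : energy α q = energy α (c 0, 0)) : ∃ x, orbit x = q := by
    obtain ⟨t, ht⟩ := hsol.exists_eq_of_energy_eq hα (hc0 ▸ hΛ) hs0 hp hper hq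
    exact ⟨t, ht⟩
  have hη' : EqOn η (polarMap α γ (2 / (α + 3)) orbit) (univ ×ˢ Ioi 0) := by
    rintro ⟨x, r⟩ ⟨-, hr : 0 < r⟩
    obtain ⟨θ, rfl⟩ := QuotientAddGroup.mk_surjective x
    rw [hη, polarMap_apply hγ.le hr]
    rfl
  have hκ : 2 / (α + 3) ≠ 0 := by positivity
  have hbij := (bijOn_polarMap hα₁ hγ hκ hE horbit hinj hsurj).congr hη'.symm
  have hmaps := hbij.surjOn.mapsTo_invFunOn
  refine ⟨hbij, (continuousOn_polarMap hγ (hsol.continuous_lift_orbit hper)).congr hη',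
    ⟨Function.invFunOn η (univ ×ˢ Ioi 0), ?_, hbij.invOn_invFunOn⟩, fun θ r hr => ?_⟩
  · exact continuousOn_of_rightInvOn_polarMap hα₁ hγ hκ hE horbit
      (hsol.continuous_lift_orbit hper) hinj hmaps (hbij.invOn_invFunOn.2.congr_right hmaps hη')
  · rw [jacobian_eq hα₁ hγ hr, hsol.energy_eq (by linarith), hc0, hs0]
    convert hγdef using 1
    simp only [energy, abs_of_pos hΛ]
    field_simp
    ring
end

section
/- Let α ≥ 3 and suppose H : ℝ × [I_*, ∞) × ℝ → ℝ solves κ₁ H^{2(α+1)/(α+3)} − γ H^{2/(α+3)} p(φ) c(τ) = I with p, c bounded. Then there exist constants α₀, β₀ > 0 and I_* > 0 such that α₀ I^{(α+3)/(2(α+1))} ≤ H(φ, I; τ) ≤ β₀ I^{(α+3)/(2(α+1))} for all I ≥ I_* and all φ, τ ∈ ℝ. -/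
/-!
With `a = 2(α+1)/(α+3)` and `b = 2/(α+3)` we have `0 < b < a`, and the equation says
`|I - κ₁ H^a| ≤ C H^b` with `C = γ Mp Mc`. For `I > κ₁ + C` this forces `H ≥ 1`, so `I ≤ (κ₁ + C) H^a`.
Since `b < a`, the perturbation `C H^b` is at most `κ₁ H^a / 2` once `H` is large, and then
`κ₁ H^a / 2 ≤ I`. Both bounds invert to `H ≍ I^{1/a}`, and `(α+3)/(2(α+1)) = 1/a`.
-/

namespace Real

variable {a b κ C K H I : ℝ}

lemma le_mul_rpow_of_le_add_mul_rpow (hb : 0 ≤ b) (hba : b ≤ a) (hκ : 0 ≤ κ) (hC : 0 ≤ C)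
    (hH : 0 < H) (hI : κ + C < I) (h : I ≤ κ * H ^ a + C * H ^ b) : I ≤ (κ + C) * H ^ a := by
  have hH1 : 1 ≤ H := by
    by_contra! hH1
    have : H ^ a ≤ 1 := rpow_le_one hH.le hH1.le (hb.trans hba)
    have : H ^ b ≤ 1 := rpow_le_one hH.le hH1.le hb
    nlinarith
  have : H ^ b ≤ H ^ a := rpow_le_rpow_of_exponent_le hH1 hba
  nlinarith

lemma mul_rpow_le_mul_rpow_of_div_rpow_inv_le {ε : ℝ} (hba : b < a) (hC : 0 ≤ C) (hε : 0 < ε)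
    (hH : 0 < H) (h : (C / ε) ^ (a - b)⁻¹ ≤ H) : C * H ^ b ≤ ε * H ^ a := by
  have hCε : C / ε ≤ H ^ (a - b) :=
    (rpow_inv_le_iff_of_pos (by positivity) hH.le (sub_pos.2 hba)).1 h
  calc C * H ^ b ≤ ε * H ^ (a - b) * H ^ b := by
        gcongr
        rwa [div_le_iff₀' hε] at hCε
    _ = ε * H ^ a := by rw [mul_assoc, ← rpow_add hH, sub_add_cancel]

lemma inv_rpow_inv_mul_rpow_inv_le (ha : 0 < a) (hK : 0 < K) (hI : 0 ≤ I) (hH : 0 ≤ H)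
    (h : I ≤ K * H ^ a) : (K ^ a⁻¹)⁻¹ * I ^ a⁻¹ ≤ H := by
  rw [inv_mul_eq_div, ← div_rpow hI hK.le, rpow_inv_le_iff_of_pos (by positivity) hH ha,
    div_le_iff₀' hK]
  exact h

lemma le_inv_rpow_inv_mul_rpow_inv (ha : 0 < a) (hK : 0 < K) (hH : 0 ≤ H)
    (h : K * H ^ a ≤ I) : H ≤ (K ^ a⁻¹)⁻¹ * I ^ a⁻¹ := by
  have hI : 0 ≤ I := le_trans (by positivity) h
  rw [inv_mul_eq_div, ← div_rpow hI hK.le, le_rpow_inv_iff_of_pos hH (by positivity) ha,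
    le_div_iff₀' hK]
  exact h

theorem exists_rpow_inv_bounds_of_abs_sub_mul_rpow_le (hb : 0 ≤ b) (hba : b < a) (hκ : 0 < κ)
    (hC : 0 ≤ C) :
    ∃ Istar > 0, ∃ α₀ > 0, ∃ β₀ > 0, ∀ I H : ℝ, Istar ≤ I → 0 < H →
      |I - κ * H ^ a| ≤ C * H ^ b → α₀ * I ^ a⁻¹ ≤ H ∧ H ≤ β₀ * I ^ a⁻¹ := by
  have ha : 0 < a := hb.trans_lt hba
  set H₀ := (C / (κ / 2)) ^ (a - b)⁻¹
  set β₀ := max H₀ (((κ / 2) ^ a⁻¹)⁻¹)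
  have hβ₀ : 0 < β₀ := lt_max_of_lt_right (by positivity)
  refine ⟨κ + C + 1, by positivity, ((κ + C) ^ a⁻¹)⁻¹, by positivity, β₀, hβ₀, ?_⟩
  intro I H hI hH h
  obtain ⟨hlow, hup⟩ := abs_sub_le_iff.1 h
  refine ⟨inv_rpow_inv_mul_rpow_inv_le ha (by positivity) (by linarith) hH.le
    (le_mul_rpow_of_le_add_mul_rpow hb hba.le hκ.le hC hH (by linarith) (by linarith)), ?_⟩
  have hI1 : 1 ≤ I ^ a⁻¹ := one_le_rpow (by linarith) (by positivity)
  rcases le_or_gt H H₀ with hH₀ | hH₀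
  · calc H ≤ β₀ := hH₀.trans (le_max_left _ _)
      _ ≤ β₀ * I ^ a⁻¹ := le_mul_of_one_le_right hβ₀.le hI1
  · have hdom := mul_rpow_le_mul_rpow_of_div_rpow_inv_le hba hC (by positivity) hH hH₀.le
    calc H ≤ ((κ / 2) ^ a⁻¹)⁻¹ * I ^ a⁻¹ :=
          le_inv_rpow_inv_mul_rpow_inv ha (by positivity) hH.le (by linarith)
      _ ≤ β₀ * I ^ a⁻¹ := by gcongr; exact le_max_right _ _

end Real

theorem stmt8 (α γ κ₁ Mc Mp : ℝ) (hα : 3 ≤ α) (hγ : 0 < γ) (hκ₁ : 0 < κ₁)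
    (c p : ℝ → ℝ) (hc : ∀ t, |c t| ≤ Mc) (hp : ∀ t, |p t| ≤ Mp) :
    ∃ Istar > 0, ∃ α₀ > 0, ∃ β₀ > 0, ∀ (φ τ I H : ℝ), Istar ≤ I → 0 < H →
      κ₁ * H ^ (2 * (α + 1)/(α + 3)) - γ * H ^ (2/(α + 3)) * p φ * c τ = I →
      α₀ * I ^ ((α + 3)/(2 * (α + 1))) ≤ H ∧ H ≤ β₀ * I ^ ((α + 3)/(2 * (α + 1))) := by
  have hMc : 0 ≤ Mc := (abs_nonneg _).trans (hc 0)
  have hMp : 0 ≤ Mp := (abs_nonneg _).trans (hp 0)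
  have hba : 2 / (α + 3) < 2 * (α + 1) / (α + 3) := by gcongr; linarith
  obtain ⟨Istar, hIstar, α₀, hα₀, β₀, hβ₀, hbounds⟩ :=
    Real.exists_rpow_inv_bounds_of_abs_sub_mul_rpow_le (by positivity) hba hκ₁
      (by positivity : 0 ≤ γ * Mp * Mc)
  refine ⟨Istar, hIstar, α₀, hα₀, β₀, hβ₀, fun φ τ I H hI hH heq => ?_⟩
  rw [← inv_div]
  refine hbounds I H hI hH ?_
  calc |I - κ₁ * H ^ (2 * (α + 1) / (α + 3))|
        = γ * H ^ (2 / (α + 3)) * |p φ| * |c τ| := by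
          rw [← heq, sub_sub_cancel_left, abs_neg, abs_mul, abs_mul, abs_of_pos (by positivity)]
    _ ≤ γ * H ^ (2 / (α + 3)) * Mp * Mc := by gcongr; exacts [hp φ, hc τ]
    _ = γ * Mp * Mc * H ^ (2 / (α + 3)) := by ring
end

section
/- Let g ∈ C¹(𝕋^N) with ‖∂_ω g‖_∞ ≤ κ < 1, where ∂_ω = Σᵢ ωᵢ ∂/∂θᵢ and ω has positive rationally independent entries. Then for each Ω̄ ∈ 𝕋^N the fixed-point equation q = g(Ω̄ + ι(q)) has a unique solution q = 𝐪(Ω̄) ∈ ℝ with |𝐪(Ω̄)| ≤ ‖g‖_∞/(1−κ), and 𝐪 : 𝕋^N → ℝ is continuous. Consequently, the map φ ↦ φ − g_Θ̄(φ) (with g_Θ̄(φ) = g(Θ̄ + ι(φ))) is a bijection of ℝ whose inverse has the form ψ ↦ ψ + 𝐪(Θ̄ + ι(ψ)). -/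
/-!
The right-hand side `q ↦ g (Ω + ι q)` has derivative `∂_ω g (Ω + ι q)` in `q`, so it is a
`κ`-contraction of `ℝ`, and `𝐪 Ω` is its Banach fixed point. The a-priori estimate of the
contraction principle gives the bound, and applied at `𝐪 Ω₀` it bounds `|𝐪 Ω - 𝐪 Ω₀|` by
`|g (Ω + ι (𝐪 Ω₀)) - g (Ω₀ + ι (𝐪 Ω₀))| / (1 - κ)`, which gives continuity. Since `ι` is additive,
`φ = ψ + q` solves `φ - g (Θ + ι φ) = ψ` exactly when `q` is the fixed point at `Θ + ι ψ`.
-/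

open NNReal Function Topology

namespace ContractingWith

variable {α : Type*} [MetricSpace α] {K : ℝ≥0}

theorem continuous_fixedPoint [Nonempty α] [CompleteSpace α] {X : Type*} [TopologicalSpace X]
    {f : X → α → α} (hf : ∀ x, ContractingWith K (f x))
    (hcont : ∀ a, Continuous fun x ↦ f x a) :
    Continuous fun x ↦ fixedPoint (f x) (hf x) := by
  rw [continuous_iff_continuousAt]
  intro x₀
  set p₀ := fixedPoint (f x₀) (hf x₀)
  have hp₀ : f x₀ p₀ = p₀ := (hf x₀).fixedPoint_isFixedPt
  have hlim : Filter.Tendsto (fun x ↦ dist p₀ (f x p₀) / (1 - K)) (𝓝 x₀) (𝓝 0) := by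
    have := ((tendsto_const_nhds (x := p₀)).dist ((hcont p₀).tendsto x₀)).div_const
      (1 - (K : ℝ))
    rwa [hp₀, dist_self, zero_div] at this
  refine tendsto_iff_dist_tendsto_zero.2 (squeeze_zero (fun _ ↦ dist_nonneg) (fun x ↦ ?_) hlim)
  rw [dist_comm]
  exact (hf x).dist_fixedPoint_le p₀

theorem norm_fixedPoint_le {E : Type*} [NormedAddCommGroup E] [CompleteSpace E] {f : E → E}
    (hf : ContractingWith K f) {C : ℝ} (hC : ∀ x, ‖f x‖ ≤ C) :
    ‖fixedPoint f hf‖ ≤ C / (1 - K) := by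
  have := hf.dist_fixedPoint_le 0
  rw [dist_zero_left, dist_zero_left] at this
  exact this.trans (by gcongr; exacts [hf.one_sub_K_pos.le, hC 0])

theorem injective_id_sub {E : Type*} [NormedAddCommGroup E] {f : E → E}
    (hf : ContractingWith K f) : Injective fun x ↦ x - f x := by
  intro x y hxy
  have hdist : dist x y ≤ K * dist x y :=
    calc dist x y = dist (f x) (f y) := by
          rw [dist_eq_norm, dist_eq_norm, sub_eq_sub_iff_sub_eq_sub.2 hxy]
      _ ≤ K * dist x y := hf.2.dist_le_mul x y
  have := hf.one_sub_K_pos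
  exact dist_le_zero.1 (by nlinarith [dist_nonneg (x := x) (y := y)])

end ContractingWith

section Flow

variable {G : Type*} [AddSemigroup G] {ι : ℝ → G} {g g' : G → ℝ}

theorem hasDerivAt_comp_add_of_hasDerivAt_zero (hadd : ∀ s t, ι (s + t) = ι s + ι t)
    (hderiv : ∀ Ω, HasDerivAt (fun t ↦ g (Ω + ι t)) (g' Ω) 0) (Ω : G) (t : ℝ) :
    HasDerivAt (fun s ↦ g (Ω + ι s)) (g' (Ω + ι t)) t := by
  have hshift : (fun s ↦ g (Ω + ι s)) = fun s ↦ g (Ω + ι t + ι (s - t)) := by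
    funext s
    rw [add_assoc, ← hadd, add_sub_cancel]
  rw [hshift]
  exact HasDerivAt.comp_sub_const t t (by rw [sub_self]; exact hderiv (Ω + ι t))

theorem lipschitzWith_comp_add (hadd : ∀ s t, ι (s + t) = ι s + ι t) {K : ℝ≥0}
    (hderiv : ∀ Ω, HasDerivAt (fun t ↦ g (Ω + ι t)) (g' Ω) 0) (hbound : ∀ Ω, |g' Ω| ≤ K)
    (Ω : G) : LipschitzWith K fun t ↦ g (Ω + ι t) := by
  have hder := hasDerivAt_comp_add_of_hasDerivAt_zero hadd hderiv Ω
  refine lipschitzWith_of_nnnorm_deriv_le (fun t ↦ (hder t).differentiableAt) fun t ↦ ?_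
  rw [(hder t).deriv, ← NNReal.coe_le_coe, coe_nnnorm, Real.norm_eq_abs]
  exact hbound _

theorem add_sub_comp_add_eq (hadd : ∀ s t, ι (s + t) = ι s + ι t) {Θ : G} {ψ q : ℝ}
    (hq : q = g (Θ + ι ψ + ι q)) : ψ + q - g (Θ + ι (ψ + q)) = ψ := by
  rw [hadd, ← add_assoc, ← hq, add_sub_cancel_right]

end Flow

theorem stmt16_general (N : ℕ) (ω : Fin N → ℝ)
    (ι : ℝ → Fin N → AddCircle (1:ℝ))
    (hι : ∀ t i, ι t i = ((t * ω i : ℝ) : AddCircle (1:ℝ)))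
    (g gω : (Fin N → AddCircle (1:ℝ)) → ℝ) (κ C : ℝ) (hκ : κ < 1)
    (hgcont : Continuous g)
    (hderiv : ∀ Ω, HasDerivAt (fun t => g (Ω + ι t)) (gω Ω) 0)
    (hgωbdd : ∀ Ω, |gω Ω| ≤ κ) (hgbdd : ∀ Ω, |g Ω| ≤ C) :
    ∃ Q : (Fin N → AddCircle (1:ℝ)) → ℝ, Continuous Q ∧
      (∀ Ω, Q Ω = g (Ω + ι (Q Ω)) ∧ |Q Ω| ≤ C / (1 - κ) ∧
        ∀ q', q' = g (Ω + ι q') → q' = Q Ω) ∧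
      (∀ Θ : Fin N → AddCircle (1:ℝ),
        Function.Bijective (fun φ : ℝ => φ - g (Θ + ι φ)) ∧
        ∀ ψ : ℝ, (ψ + Q (Θ + ι ψ)) - g (Θ + ι (ψ + Q (Θ + ι ψ))) = ψ) := by
  lift κ to ℝ≥0 using (abs_nonneg _).trans (hgωbdd 0)
  have hadd : ∀ s t, ι (s + t) = ι s + ι t := fun s t ↦ funext fun i ↦ by
    simp only [Pi.add_apply, hι, add_mul, AddCircle.coe_add]
  have hcontr : ∀ Ω, ContractingWith κ fun t ↦ g (Ω + ι t) :=
    fun Ω ↦ ⟨mod_cast hκ, lipschitzWith_comp_add hadd hderiv hgωbdd Ω⟩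
  set Q := fun Ω ↦ ContractingWith.fixedPoint _ (hcontr Ω)
  have hfix : ∀ Ω, Q Ω = g (Ω + ι (Q Ω)) := fun Ω ↦ (hcontr Ω).fixedPoint_isFixedPt.symm
  have hinv : ∀ Θ ψ, ψ + Q (Θ + ι ψ) - g (Θ + ι (ψ + Q (Θ + ι ψ))) = ψ :=
    fun Θ ψ ↦ add_sub_comp_add_eq hadd (hfix (Θ + ι ψ))
  refine ⟨Q, ContractingWith.continuous_fixedPoint hcontr fun t ↦ ?_, fun Ω ↦ ⟨hfix Ω, ?_, ?_⟩,
    fun Θ ↦ ⟨⟨(hcontr Θ).injective_id_sub, fun ψ ↦ ⟨_, hinv Θ ψ⟩⟩, hinv Θ⟩⟩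
  · exact hgcont.comp (continuous_id.add continuous_const)
  · exact (hcontr Ω).norm_fixedPoint_le fun t ↦ hgbdd _
  · exact fun q' hq' ↦ (hcontr Ω).fixedPoint_unique hq'.symm

theorem stmt16 (N : ℕ) (ω : Fin N → ℝ) (hω : ∀ i, 0 < ω i)
    (hind : ∀ k : Fin N → ℤ, ∑ i, (k i : ℝ) * ω i = 0 → k = 0)
    (ι : ℝ → Fin N → AddCircle (1:ℝ))
    (hι : ∀ t i, ι t i = ((t * ω i : ℝ) : AddCircle (1:ℝ)))
    (g gω : (Fin N → AddCircle (1:ℝ)) → ℝ) (κ C : ℝ) (hκ0 : 0 ≤ κ) (hκ : κ < 1)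
    (hgcont : Continuous g) (hgωcont : Continuous gω)
    (hderiv : ∀ Ω, HasDerivAt (fun t => g (Ω + ι t)) (gω Ω) 0)
    (hgωbdd : ∀ Ω, |gω Ω| ≤ κ) (hgbdd : ∀ Ω, |g Ω| ≤ C) :
    ∃ Q : (Fin N → AddCircle (1:ℝ)) → ℝ, Continuous Q ∧
      (∀ Ω, Q Ω = g (Ω + ι (Q Ω)) ∧ |Q Ω| ≤ C / (1 - κ) ∧
        ∀ q', q' = g (Ω + ι q') → q' = Q Ω) ∧
      (∀ Θ : Fin N → AddCircle (1:ℝ),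
        Function.Bijective (fun φ : ℝ => φ - g (Θ + ι φ)) ∧
        ∀ ψ : ℝ, (ψ + Q (Θ + ι ψ)) - g (Θ + ι (ψ + Q (Θ + ι ψ))) = ψ) :=
  stmt16_general N ω ι hι g gω κ C hκ hgcont hderiv hgωbdd hgbdd
end
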